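/- arXiv:math/0210174 — 8 statements merged into one kernel-verified Lean document; each statement's English description precedes it below -/
import Mathlib

section
/- Let ε₁,δ₁,…,ε_r,δ_r ∈ {1,−1} (r ≥ 0 arbitrary) and let M = M_{ε₁,δ₁}·…·M_{ε_r,δ_r}. Then for all odd integers m > n > 1 with gcd(m,n) = 1 and every sign ε ∈ {1,−1}, the vector M·(1,0)ᵀ is not equal to (2mn+ε, 2n²)ᵀ. -/
/-!
Reversed, the vector `M·(1,0)ᵀ` is a pair `(x_k, x_{k+1})` of consecutive terms of a sequence
`x₀ = 0, x₁ = 1, x_{k+1} = 2x_k ± x_{k-1}` (each `M_{k,l}` performs two such steps). Such chains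
are encoded by products of `2 × 2` matrices whose generating set is closed under transposition,
so a chain ending in `(p, q)` can be read backwards: it yields a chain ending in `(|ζ|, p)`, where
`ζ` is an inverse of `q` modulo `p` (modulo `2p` if `p` is even). Applied to `(2n², 2mn + ε)` this
gives `(2ns + σ, 2n²)` with `s` odd, `0 < s < n`, coprime to `n`, and once more `(2s², 2ns + σ)`:
an infinite descent in `n`. It ends because a chain pair `(a, b)` with `a > 0` has `b < 3a`,
which rules out `s = 1`.
-/

/-- The sign function with the convention `sgn 0 = 1`. -/
def sgn (k : ℤ) : ℤ := if k < 0 then -1 else 1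

/-- The matrix `M_{k,l} = [[sgn(k)+4|kl|, 2|k|·sgn(l)], [2|l|, sgn(l)]]`. -/
def M (k l : ℤ) : Matrix (Fin 2) (Fin 2) ℤ :=
  !![sgn k + 4 * |k * l|, 2 * |k| * sgn l; 2 * |l|, sgn l]

open Matrix

inductive ChainPair : ℤ → ℤ → Prop
  | zero_one : ChainPair 0 1
  | step {a b : ℤ} (e : ℤ) (he : e = 1 ∨ e = -1) : ChainPair a b → ChainPair b (2 * b + e * a)

namespace ChainPair

variable {a b : ℤ}

theorem nonneg_and_lt (h : ChainPair a b) : 0 ≤ a ∧ a < b := by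
  induction h with
  | zero_one => norm_num
  | step e he _ ih => rcases he with rfl | rfl <;> omega

theorem lt (h : ChainPair a b) : a < b := h.nonneg_and_lt.2

theorem lt_three_mul (h : ChainPair a b) (ha : 0 < a) : b < 3 * a := by
  cases h with
  | zero_one => exact absurd ha (lt_irrefl 0)
  | step e he h' =>
    have := h'.nonneg_and_lt
    rcases he with rfl | rfl <;> omega

theorem odd_add (h : ChainPair a b) : Odd (a + b) := by
  induction h with
  | zero_one => exact odd_one
  | @step a b e he _ ih =>
    obtain ⟨k, hk⟩ := ih
    rcases he with rfl | rfl
    · exact ⟨k + b, by linarith⟩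
    · exact ⟨k + b - a, by linarith⟩

theorem step_abs {x y c d : ℤ} (h : ChainPair |x| |y|) (hc : |c| = 2) (hd : |d| = 1) :
    ChainPair |y| |d * x + c * y| := by
  have hcy : |c * y| = 2 * |y| := by rw [abs_mul, hc]
  have hdx : |d * x| = |x| := by rw [abs_mul, hd, one_mul]
  have hxy := h.lt
  obtain ⟨e, he, hsum⟩ : ∃ e : ℤ, (e = 1 ∨ e = -1) ∧ |d * x + c * y| = 2 * |y| + e * |x| := by
    rcases abs_cases (d * x) with ⟨h₁, h₂⟩ | ⟨h₁, h₂⟩ <;>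
      rcases abs_cases (c * y) with ⟨h₃, h₄⟩ | ⟨h₃, h₄⟩
    · exact ⟨1, by norm_num, by rw [abs_of_nonneg (by linarith)]; linarith⟩
    · exact ⟨-1, by norm_num, by rw [abs_of_nonpos (by linarith)]; linarith⟩
    · exact ⟨-1, by norm_num, by rw [abs_of_nonneg (by linarith)]; linarith⟩
    · exact ⟨1, by norm_num, by rw [abs_of_nonpos (by linarith)]; linarith⟩
  rw [hsum]
  exact h.step e he

end ChainPair

/-- The generators `[[0, f], [d, c]]` map `(x_{k-1}, x_k)` to `(x_k, x_{k+1})` up to signs; the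
sign `f` makes the generating set closed under transposition. -/
def chainMonoid : Submonoid (Matrix (Fin 2) (Fin 2) ℤ) :=
  Submonoid.closure {A | ∃ c d f : ℤ, |c| = 2 ∧ |d| = 1 ∧ |f| = 1 ∧ A = !![0, f; d, c]}

namespace chainMonoid

variable {P : Matrix (Fin 2) (Fin 2) ℤ}

theorem step_mem {c d f : ℤ} (hc : |c| = 2) (hd : |d| = 1) (hf : |f| = 1) :
    !![0, f; d, c] ∈ chainMonoid :=
  Submonoid.subset_closure ⟨c, d, f, hc, hd, hf, rfl⟩

theorem transpose_mem (hP : P ∈ chainMonoid) : Pᵀ ∈ chainMonoid := by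
  induction hP using Submonoid.closure_induction with
  | mem A hA =>
    obtain ⟨c, d, f, hc, hd, hf, rfl⟩ := hA
    convert step_mem hc hf hd using 1
    ext i j; fin_cases i <;> fin_cases j <;> rfl
  | one => simp
  | mul A B _ _ hA hB => simpa using mul_mem hB hA

theorem abs_det (hP : P ∈ chainMonoid) : |P.det| = 1 := by
  induction hP using Submonoid.closure_induction with
  | mem A hA =>
    obtain ⟨c, d, f, hc, hd, hf, rfl⟩ := hA
    simp [Matrix.det_fin_two_of, abs_mul, hd, hf]
  | one => simp
  | mul A B _ _ hA hB => rw [det_mul, abs_mul, hA, hB, one_mul]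

theorem chainPair_abs_mulVec (hP : P ∈ chainMonoid) {v : Fin 2 → ℤ}
    (hv : ChainPair |v 0| |v 1|) : ChainPair |(P *ᵥ v) 0| |(P *ᵥ v) 1| := by
  induction hP using Submonoid.closure_induction generalizing v with
  | mem A hA =>
    obtain ⟨c, d, f, hc, hd, hf, rfl⟩ := hA
    simpa [mulVec, dotProduct, Fin.sum_univ_two, abs_mul, hf] using hv.step_abs hc hd
  | one => simpa using hv
  | mul A B _ _ hA hB => simpa [← mulVec_mulVec] using hA (hB hv)

theorem odd_add_mulVec (hP : P ∈ chainMonoid) {v : Fin 2 → ℤ} (hv : Odd (v 0 + v 1)) :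
    Odd ((P *ᵥ v) 0 + (P *ᵥ v) 1) := by
  induction hP using Submonoid.closure_induction generalizing v with
  | mem A hA =>
    obtain ⟨c, d, f, hc, hd, hf, rfl⟩ := hA
    rw [Int.odd_iff] at hv ⊢
    simp only [mulVec, dotProduct, Fin.sum_univ_two, of_apply, cons_val', cons_val_zero,
      cons_val_one, empty_val', cons_val_fin_one]
    rcases (abs_eq (by norm_num)).1 hc with rfl | rfl <;>
      rcases (abs_eq (by norm_num)).1 hd with rfl | rfl <;>
      rcases (abs_eq (by norm_num)).1 hf with rfl | rfl <;> omega
  | one => simpa using hv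
  | mul A B _ _ hA hB => simpa [← mulVec_mulVec] using hA (hB hv)

theorem chainPair_abs_row_one (hP : P ∈ chainMonoid) : ChainPair |P 1 0| |P 1 1| := by
  simpa [mulVec, dotProduct, Fin.sum_univ_two] using
    chainPair_abs_mulVec (transpose_mem hP) (v := ![0, 1]) (by simpa using ChainPair.zero_one)

theorem exists_of_chainPair {a b : ℤ} (h : ChainPair a b) :
    ∃ P ∈ chainMonoid, P 0 1 = a ∧ P 1 1 = b := by
  induction h with
  | zero_one => exact ⟨1, one_mem _, by simp, by simp⟩
  | step e he _ ih =>
    obtain ⟨P, hP, h₀, h₁⟩ := ih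
    refine ⟨!![0, 1; e, 2] * P, mul_mem (step_mem (by norm_num) ?_ (by norm_num)) hP, ?_, ?_⟩
    · rcases he with rfl | rfl <;> norm_num
    · simp [Matrix.mul_apply, Fin.sum_univ_two, h₁]
    · simp [Matrix.mul_apply, Fin.sum_univ_two, h₀, h₁]; ring

end chainMonoid

/-- Read the chain ending in `(p, q)` backwards, i.e. transpose its matrix. -/
theorem ChainPair.exists_inverse {p q : ℤ} (h : ChainPair p q) (hp : 0 < p) :
    ∃ ζ u : ℤ, ChainPair |ζ| p ∧ ζ * q = p * u + 1 ∧ Odd (ζ + u) := by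
  cases h with
  | zero_one => exact absurd hp (lt_irrefl 0)
  | @step a _ e he h' =>
    obtain ⟨P, hP, h₀, h₁⟩ := chainMonoid.exists_of_chainPair h'
    obtain ⟨D, hD⟩ : ∃ D, P.det = D := ⟨_, rfl⟩
    have hdet : D = P 0 0 * p - a * P 1 0 := by rw [← hD, det_fin_two, h₀, h₁]
    have hD₁ : D = 1 ∨ D = -1 := (abs_eq zero_le_one).1 (hD ▸ chainMonoid.abs_det hP)
    have hrow := chainMonoid.chainPair_abs_row_one hP
    rw [h₁, abs_of_pos hp] at hrow
    have hcol : Odd (P 0 0 + P 1 0) := by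
      simpa [mulVec, dotProduct, Fin.sum_univ_two] using
        chainMonoid.odd_add_mulVec hP (v := ![1, 0]) (by simp)
    refine ⟨-D * e * P 1 0, -D * (2 * e * P 1 0 + P 0 0), ?_, ?_, ?_⟩
    · rcases hD₁ with rfl | rfl <;> rcases he with rfl | rfl <;> simpa using hrow
    · have hD₂ : D * D = 1 := by rcases hD₁ with rfl | rfl <;> norm_num
      have he₂ : e * e = 1 := by rcases he with rfl | rfl <;> norm_num
      linear_combination (-D * a * P 1 0) * he₂ - D * hdet + hD₂
    · rw [Int.odd_iff] at hcol ⊢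
      rcases hD₁ with rfl | rfl <;> rcases he with rfl | rfl <;> omega

theorem dvd_sub_of_mul_eq_add_one {N q ζ u x : ℤ} (hζ : ζ * q = N * u + 1) (hx : N ∣ x * q - 1) :
    N ∣ ζ - x := by
  have hcop : IsCoprime N q := ⟨-u, ζ, by linear_combination hζ⟩
  refine hcop.dvd_of_dvd_mul_right ?_
  obtain ⟨w, hw⟩ := hx
  exact ⟨u - w, by linear_combination hζ - hw⟩

theorem exists_abs_sub_two_mul_eq {n t ε : ℤ} (hn : 0 < n) (ht : t ≠ 0) (hε : ε = 1 ∨ ε = -1) :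
    ∃ σ : ℤ, (σ = 1 ∨ σ = -1) ∧ |ε - 2 * n * t| = 2 * n * |t| + σ := by
  have h2nt : 2 * n ≤ 2 * n * |t| := le_mul_of_one_le_right (by positivity) (Int.one_le_abs ht)
  rcases lt_or_gt_of_ne ht with ht | ht
  · refine ⟨ε, hε, ?_⟩
    rw [abs_of_neg ht, abs_of_pos (by rcases hε with rfl | rfl <;> nlinarith)]
    ring
  · refine ⟨-ε, by rcases hε with rfl | rfl <;> norm_num, ?_⟩
    rw [abs_of_pos ht, abs_of_neg (by rcases hε with rfl | rfl <;> nlinarith)]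
    ring

/-- The inverse of `2mn + ε` modulo `4n²` is `ε - 2mn`; reduced into `(-2n², 2n²)` it has the
form `±(2ns + σ)`. -/
theorem exists_chainPair_two_mul_add {m n ε : ℤ} (hn : 1 < n) (hm : Odd m) (hmn : IsCoprime m n)
    (hε : ε = 1 ∨ ε = -1) (h : ChainPair (2 * n ^ 2) (2 * m * n + ε)) :
    ∃ s σ : ℤ, 0 < s ∧ s < n ∧ Odd s ∧ IsCoprime n s ∧ (σ = 1 ∨ σ = -1) ∧
      ChainPair (2 * n * s + σ) (2 * n ^ 2) := by
  obtain ⟨ζ, u, hpair, hζu, hodd⟩ := h.exists_inverse (by positivity)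
  have hζ : Odd ζ := by
    have := hpair.odd_add
    rw [Int.odd_add, odd_abs] at this
    exact this.2 ⟨n ^ 2, by ring⟩
  obtain ⟨u', rfl⟩ := (Int.odd_add.1 hodd).1 hζ
  have hε₂ : ε * ε = 1 := by rcases hε with rfl | rfl <;> norm_num
  obtain ⟨k, hk⟩ : 4 * n ^ 2 ∣ ζ - (ε - 2 * m * n) :=
    dvd_sub_of_mul_eq_add_one (q := 2 * m * n + ε) (u := u') (by linear_combination hζu)
      ⟨-m ^ 2, by linear_combination hε₂⟩
  obtain ⟨t, ht⟩ : ∃ t, t = m - 2 * n * k := ⟨_, rfl⟩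
  have hζt : ζ = ε - 2 * n * t := by linear_combination hk + 2 * n * ht
  have ht_odd : Odd t := ht ▸ hm.sub_even ⟨n * k, by ring⟩
  have ht₀ : t ≠ 0 := by rintro rfl; exact Int.not_odd_zero ht_odd
  have hnt : IsCoprime n |t| := by
    have := (hmn.symm.add_mul_left_right (-2 * k)).abs_right
    rwa [show m + n * (-2 * k) = t by rw [ht]; ring] at this
  obtain ⟨σ, hσ, hσ_eq⟩ := exists_abs_sub_two_mul_eq (zero_lt_one.trans hn) ht₀ hε
  have hlt := hpair.lt
  rw [hζt, hσ_eq] at hpair hlt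
  have hle : |t| ≤ n := by
    by_contra! hgt
    rcases hσ with rfl | rfl <;> nlinarith
  have hne : |t| ≠ n := by
    rintro heq
    rw [heq, isCoprime_self, Int.isUnit_iff] at hnt
    omega
  exact ⟨|t|, σ, abs_pos.2 ht₀, lt_of_le_of_ne hle hne, odd_abs.2 ht_odd, hnt, hσ, hpair⟩

/-- `2s²` is an inverse of `2n²` modulo `2ns + σ`, since `(2ns)² ≡ σ² = 1`. -/
theorem chainPair_two_mul_sq_of_two_mul_add {n s σ : ℤ} (hs : 0 < s) (hsn : s < n)
    (hσ : σ = 1 ∨ σ = -1) (h : ChainPair (2 * n * s + σ) (2 * n ^ 2)) :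
    ChainPair (2 * s ^ 2) (2 * n * s + σ) := by
  have hp : 0 < 2 * n * s + σ := by rcases hσ with rfl | rfl <;> nlinarith
  obtain ⟨ζ, u, hpair, hζu, -⟩ := h.exists_inverse hp
  have hσ₂ : σ * σ = 1 := by rcases hσ with rfl | rfl <;> norm_num
  have hdvd : 2 * n * s + σ ∣ ζ - 2 * s ^ 2 :=
    dvd_sub_of_mul_eq_add_one hζu ⟨2 * n * s - σ, by linear_combination hσ₂⟩
  have hp_odd : Odd (2 * n * s + σ) := by rcases hσ with rfl | rfl <;> simp [parity_simps]
  have hζ : Even ζ := by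
    have := hpair.odd_add
    rw [Int.odd_add, odd_abs] at this
    rw [← Int.not_odd_iff_even, this, Int.not_even_iff_odd]
    exact hp_odd
  have h2dvd : 2 * (2 * n * s + σ) ∣ ζ - 2 * s ^ 2 :=
    (Int.isCoprime_two_left.2 hp_odd).mul_dvd (hζ.sub (by simp [parity_simps])).two_dvd hdvd
  have hζlt := hpair.lt
  have hs₂ : 0 < 2 * s ^ 2 := by positivity
  have hss : 2 * s ^ 2 < 2 * n * s + σ := by rcases hσ with rfl | rfl <;> nlinarith
  have hζ_eq : ζ - 2 * s ^ 2 = 0 :=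
    Int.eq_zero_of_abs_lt_dvd h2dvd ((abs_sub _ _).trans_lt (by rw [abs_of_pos hs₂]; linarith))
  rwa [sub_eq_zero.1 hζ_eq, abs_of_pos hs₂] at hpair

theorem not_chainPair_two_mul_sq {m n ε : ℤ} (hn : 1 < n) (hn_odd : Odd n) (hm : Odd m)
    (hmn : IsCoprime m n) (hε : ε = 1 ∨ ε = -1) : ¬ ChainPair (2 * n ^ 2) (2 * m * n + ε) := by
  intro h
  obtain ⟨s, σ, hs, hsn, hs_odd, hns, hσ, hpair⟩ := exists_chainPair_two_mul_add hn hm hmn hε h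
  have hpair' := chainPair_two_mul_sq_of_two_mul_add hs hsn hσ hpair
  obtain rfl | hs₁ := eq_or_lt_of_le (show 1 ≤ s from hs)
  · have h₁ := hpair'.lt_three_mul (by norm_num)
    have h₂ := hpair.lt_three_mul (by omega)
    norm_num at h₁
    obtain rfl : n = 3 := by obtain ⟨j, rfl⟩ := hn_odd; omega
    norm_num at h₂
    omega
  · exact not_chainPair_two_mul_sq hs₁ hs_odd hn_odd hns hσ hpair'
termination_by n.toNat
decreasing_by omega

theorem M_eq {k l : ℤ} (hk : k = 1 ∨ k = -1) (hl : l = 1 ∨ l = -1) :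
    M k l = !![k + 4, 2 * l; 2, l] := by
  rcases hk with rfl | rfl <;> rcases hl with rfl | rfl <;>
    ext i j <;> fin_cases i <;> fin_cases j <;> simp [M, sgn]

/-- `M_{k,l}` performs two steps of a chain, with signs `l` and then `k`. -/
theorem chainPair_M_mulVec {k l : ℤ} (hk : k = 1 ∨ k = -1) (hl : l = 1 ∨ l = -1)
    {v : Fin 2 → ℤ} (h : ChainPair (v 1) (v 0)) :
    ChainPair ((M k l *ᵥ v) 1) ((M k l *ᵥ v) 0) := by
  rw [M_eq hk hl]
  simp only [mulVec, dotProduct, Fin.sum_univ_two, of_apply, cons_val', cons_val_zero,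
    cons_val_one, empty_val', cons_val_fin_one]
  convert (h.step l hl).step k hk using 1
  ring

theorem chainPair_prod_mulVec (L : List (Matrix (Fin 2) (Fin 2) ℤ))
    (hL : ∀ A ∈ L, ∃ k l : ℤ, (k = 1 ∨ k = -1) ∧ (l = 1 ∨ l = -1) ∧ A = M k l) :
    ChainPair ((L.prod *ᵥ ![1, 0]) 1) ((L.prod *ᵥ ![1, 0]) 0) := by
  induction L with
  | nil => simpa using ChainPair.zero_one
  | cons A L ih =>
    obtain ⟨k, l, hk, hl, rfl⟩ := hL A List.mem_cons_self
    rw [List.prod_cons, ← mulVec_mulVec]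
    exact chainPair_M_mulVec hk hl (ih fun B hB => hL B (List.mem_cons_of_mem _ hB))

theorem stmt_3_general (r : ℕ) (ε' δ : Fin r → ℤ)
    (hε' : ∀ i, ε' i = 1 ∨ ε' i = -1) (hδ : ∀ i, δ i = 1 ∨ δ i = -1)
    (m n : ℤ) (hm : Odd m) (hnodd : Odd n)
    (hn : n > 1) (hgcd : Int.gcd m n = 1)
    (ε : ℤ) (hε : ε = 1 ∨ ε = -1) :
    (List.ofFn fun i => M (ε' i) (δ i)).prod.mulVec ![1, 0] ≠
      ![2 * m * n + ε, 2 * n ^ 2] := by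
  intro h
  have hpair := chainPair_prod_mulVec (List.ofFn fun i => M (ε' i) (δ i)) (by
    simp only [List.mem_ofFn, forall_exists_index]
    rintro _ i rfl
    exact ⟨_, _, hε' i, hδ i, rfl⟩)
  rw [h] at hpair
  exact not_chainPair_two_mul_sq hn hnodd hm (Int.isCoprime_iff_gcd_eq_one.2 hgcd) hε
    (by simpa using hpair)

theorem stmt_3 (r : ℕ) (ε' δ : Fin r → ℤ)
    (hε' : ∀ i, ε' i = 1 ∨ ε' i = -1) (hδ : ∀ i, δ i = 1 ∨ δ i = -1)
    (m n : ℤ) (hm : Odd m) (hnodd : Odd n)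
    (hmn : m > n) (hn : n > 1) (hgcd : Int.gcd m n = 1)
    (ε : ℤ) (hε : ε = 1 ∨ ε = -1) :
    (List.ofFn fun i => M (ε' i) (δ i)).prod.mulVec ![1, 0] ≠
      ![2 * m * n + ε, 2 * n ^ 2] :=
  stmt_3_general r ε' δ hε' hδ m n hm hnodd hn hgcd ε hε
end

section
/- Let r ≥ 1, let ε₁,δ₁,…,ε_r,δ_r ∈ {1,−1}, and write (p,q)ᵀ = M_{ε₁,δ₁}·…·M_{ε_r,δ_r}·(1,0)ᵀ. Then p > q > 1, gcd(p,q) = 1, and q is even. -/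
/-!
Each `M_{k,l}` with `k, l ≠ 0` has determinant `sgn k · sgn l = ±1`, so it preserves coprimality of
the vector it acts on. If `0 ≤ q < p` with `q` even, the image `(p', q')` of `(p, q)` has
`q' = 2|l| p + sgn(l) q ≥ 2p - q > p`, which is even, and `p' = sgn(k) p + 2|k| q' ≥ q' + (q' - p) > q'`.
So these properties propagate from `(1, 0)` through the product, and the outermost factor
gives `q > p_inner ≥ 1`.
-/

open Matrix

lemma sgn_eq_one_or_neg_one (k : ℤ) : sgn k = 1 ∨ sgn k = -1 := by
  unfold sgn; split_ifs <;> simp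

lemma det_M (k l : ℤ) : (M k l).det = sgn k * sgn l := by
  rw [M, det_fin_two_of, abs_mul]
  ring

lemma isUnit_det_M (k l : ℤ) : IsUnit (M k l).det := by
  rw [det_M]
  exact (Int.isUnit_iff.mpr (sgn_eq_one_or_neg_one k)).mul
    (Int.isUnit_iff.mpr (sgn_eq_one_or_neg_one l))

lemma M_mulVec (k l : ℤ) (v : Fin 2 → ℤ) :
    M k l *ᵥ v = ![(sgn k + 4 * (|k| * |l|)) * v 0 + 2 * |k| * sgn l * v 1,
      2 * |l| * v 0 + sgn l * v 1] := by
  ext i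
  fin_cases i <;> simp [M, mulVec, dotProduct, Fin.sum_univ_two, abs_mul]

lemma M_mulVec_zero (k l : ℤ) (v : Fin 2 → ℤ) :
    (M k l *ᵥ v) 0 = sgn k * v 0 + 2 * |k| * (M k l *ᵥ v) 1 := by
  simp only [M_mulVec, cons_val_zero, cons_val_one]
  ring

/-- A Bézout relation for `v` is transported through `v = A⁻¹ *ᵥ (A *ᵥ v)`. -/
lemma IsCoprime.mulVec_of_isUnit_det {R : Type*} [CommRing R] {A : Matrix (Fin 2) (Fin 2) R}
    (hA : IsUnit A.det) {v : Fin 2 → R} (hv : IsCoprime (v 0) (v 1)) :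
    IsCoprime ((A *ᵥ v) 0) ((A *ᵥ v) 1) := by
  obtain ⟨u, w, huw⟩ := hv
  set B := A⁻¹
  have hv : v = B *ᵥ (A *ᵥ v) := by rw [mulVec_mulVec, nonsing_inv_mul A hA, one_mulVec]
  refine ⟨u * B 0 0 + w * B 1 0, u * B 0 1 + w * B 1 1, ?_⟩
  generalize A *ᵥ v = x at hv ⊢
  subst hv
  simp only [mulVec, dotProduct, Fin.sum_univ_two] at huw
  linear_combination huw

def IsAdmissible (v : Fin 2 → ℤ) : Prop :=
  0 ≤ v 1 ∧ v 1 < v 0 ∧ Even (v 1) ∧ IsCoprime (v 0) (v 1)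

lemma isAdmissible_one_zero : IsAdmissible ![1, 0] :=
  ⟨le_rfl, one_pos, Even.zero, isCoprime_one_left⟩

namespace IsAdmissible

variable {v : Fin 2 → ℤ} {k l : ℤ}

lemma lt_mulVec_M_one (hv : IsAdmissible v) (hl : l ≠ 0) : v 0 < (M k l *ᵥ v) 1 := by
  obtain ⟨hq, hqp, -, -⟩ := hv
  have hL : 1 ≤ |l| := Int.one_le_abs hl
  rw [M_mulVec]
  rcases sgn_eq_one_or_neg_one l with ht | ht <;>
    · simp only [ht, cons_val_one, cons_val_zero]
      nlinarith

lemma mulVec_M (hv : IsAdmissible v) (hk : k ≠ 0) (hl : l ≠ 0) : IsAdmissible (M k l *ᵥ v) := by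
  have hgrow := hv.lt_mulVec_M_one (k := k) hl
  obtain ⟨hq, hqp, hqeven, hcop⟩ := hv
  have hK : 1 ≤ |k| := Int.one_le_abs hk
  refine ⟨by omega, ?_, ?_, IsCoprime.mulVec_of_isUnit_det (isUnit_det_M k l) hcop⟩
  · have hs : -1 ≤ sgn k := by rcases sgn_eq_one_or_neg_one k with hs | hs <;> omega
    rw [M_mulVec_zero]
    nlinarith [mul_nonneg (sub_nonneg.2 hK) (hq.trans (hqp.trans hgrow).le)]
  · rw [M_mulVec]
    simp only [cons_val_one, cons_val_zero]
    exact (even_two_mul _ |>.mul_right _).add (hqeven.mul_left _)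

end IsAdmissible

lemma isAdmissible_prod_mulVec (L : List (Matrix (Fin 2) (Fin 2) ℤ))
    (hL : ∀ A ∈ L, ∃ k l, k ≠ 0 ∧ l ≠ 0 ∧ A = M k l) : IsAdmissible (L.prod *ᵥ ![1, 0]) := by
  induction L with
  | nil => simpa using isAdmissible_one_zero
  | cons A L ih =>
    obtain ⟨k, l, hk, hl, rfl⟩ := hL A List.mem_cons_self
    rw [List.prod_cons, ← mulVec_mulVec]
    exact (ih fun B hB => hL B (List.mem_cons_of_mem _ hB)).mulVec_M hk hl

theorem stmt_4 (r : ℕ) (hr : 1 ≤ r) (ε δ : Fin r → ℤ)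
    (hε : ∀ i, ε i = 1 ∨ ε i = -1) (hδ : ∀ i, δ i = 1 ∨ δ i = -1)
    (p q : ℤ)
    (hpq : (List.ofFn fun i => M (ε i) (δ i)).prod.mulVec ![1, 0] = ![p, q]) :
    p > q ∧ q > 1 ∧ Int.gcd p q = 1 ∧ 2 ∣ q := by
  obtain ⟨n, rfl⟩ := Nat.exists_eq_add_of_le' hr
  have hne (x : ℤ) (hx : x = 1 ∨ x = -1) : x ≠ 0 := by omega
  set w := (List.ofFn fun i : Fin n => M (ε i.succ) (δ i.succ)).prod *ᵥ ![1, 0]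
  have hw : IsAdmissible w := isAdmissible_prod_mulVec _ fun A hA => by
    obtain ⟨i, rfl⟩ := List.mem_ofFn.mp hA
    exact ⟨_, _, hne _ (hε i.succ), hne _ (hδ i.succ), rfl⟩
  have hvw : M (ε 0) (δ 0) *ᵥ w = ![p, q] := by
    rw [← hpq, List.ofFn_succ, List.prod_cons, ← mulVec_mulVec]
  obtain ⟨-, hqp, hqeven, hcop⟩ := hw.mulVec_M (hne _ (hε 0)) (hne _ (hδ 0))
  have hgrow := hw.lt_mulVec_M_one (k := ε 0) (hne _ (hδ 0))
  simp only [hvw, cons_val_zero, cons_val_one] at hqp hqeven hcop hgrow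
  exact ⟨hqp, by linarith [hw.1, hw.2.1], Int.isCoprime_iff_gcd_eq_one.mp hcop,
    even_iff_two_dvd.mp hqeven⟩
end

section
/- Let m, n be integers with m > n ≥ 1 and gcd(m,n) = 1, and let ε, δ ∈ {1,−1}. If 4n² ≡ δ (mod 2mn+ε), i.e. (2mn+ε) divides (4n² − δ), then n = 1 (and moreover m ≤ 3). -/
/-!
Put `k = 2mn + ε`. Since `(2mn)² ≡ ε² = 1 (mod k)`, multiplying `4n² ≡ δ` by `m²` gives
`1 ≡ δm²`, i.e. `m² ≡ δ (mod k)`. Both `4n² - δ` and `m² - δ` are positive multiples of `k`, so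
`2mn - 2 ≤ 4n²` and `2mn - 2 ≤ m²`. For `n ≥ 2` the first forces `m ≤ 2n` and the second
`m ≥ 2n`, so `n ∣ m`, contradicting coprimality. Hence `n = 1`, and then `2m + ε ≤ 4 - δ`.
-/

theorem dvd_sq_sub_of_dvd_sq_sub {R : Type*} [CommRing R] {x y ε δ : R}
    (hε : ε ^ 2 = 1) (hδ : δ ^ 2 = 1) (h : x * y + ε ∣ x ^ 2 - δ) :
    x * y + ε ∣ y ^ 2 - δ := by
  have hxy : x * y + ε ∣ x ^ 2 * y ^ 2 - 1 := ⟨x * y - ε, by linear_combination hε⟩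
  have key : y ^ 2 - δ = δ * (x ^ 2 * y ^ 2 - 1) - δ * y ^ 2 * (x ^ 2 - δ) := by
    linear_combination (-y ^ 2) * hδ
  rw [key]
  exact dvd_sub (hxy.mul_left δ) (h.mul_left _)

theorem eq_two_mul_of_two_mul_mul_sub_two_le {m n : ℤ} (hn : 2 ≤ n) (hmn : n < m)
    (h₁ : 2 * m * n - 2 ≤ m ^ 2) (h₂ : 2 * m * n - 2 ≤ 4 * n ^ 2) : m = 2 * n := by
  have hle : m ≤ 2 * n := by nlinarith
  have hge : 2 * n ≤ m := by nlinarith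
  omega

theorem Int.sq_eq_one_and_bounds_of_eq_one_or_eq_neg_one {ε : ℤ} (hε : ε = 1 ∨ ε = -1) :
    ε ^ 2 = 1 ∧ -1 ≤ ε ∧ ε ≤ 1 := by
  rcases hε with rfl | rfl <;> norm_num

theorem stmt_5 (m n : ℤ) (hmn : m > n) (hn : n ≥ 1) (hgcd : Int.gcd m n = 1)
    (ε δ : ℤ) (hε : ε = 1 ∨ ε = -1) (hδ : δ = 1 ∨ δ = -1)
    (h : (2 * m * n + ε) ∣ (4 * n ^ 2 - δ)) :
    n = 1 ∧ m ≤ 3 := by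
  obtain ⟨hε2, hε₀, hε₁⟩ := Int.sq_eq_one_and_bounds_of_eq_one_or_eq_neg_one hε
  obtain ⟨hδ2, hδ₀, hδ₁⟩ := Int.sq_eq_one_and_bounds_of_eq_one_or_eq_neg_one hδ
  have hk : 2 * m * n + ε ∣ m ^ 2 - δ := by
    have hx : 2 * n * m = 2 * m * n := by ring
    have hx2 : (2 * n) ^ 2 = 4 * n ^ 2 := by ring
    exact hx ▸ dvd_sq_sub_of_dvd_sq_sub hε2 hδ2 (hx ▸ hx2 ▸ h)
  have hk_le := Int.le_of_dvd (by nlinarith) hk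
  have h_le := Int.le_of_dvd (by nlinarith) h
  have hn1 : n = 1 := by
    by_contra hne
    have hm2n := eq_two_mul_of_two_mul_mul_sub_two_le (by omega) hmn (by linarith) (by linarith)
    have hn_dvd : n ∣ (Int.gcd m n : ℤ) := Int.dvd_coe_gcd ⟨2, by linarith⟩ dvd_rfl
    rw [hgcd] at hn_dvd
    have := Int.le_of_dvd one_pos hn_dvd
    omega
  subst hn1
  exact ⟨rfl, by linarith⟩
end

section
/- Define the integer sequence (q_s) by q₀ = 65, q₁ = 901, q₂ = 12545, and q_s = 15(q_{s−1} − q_{s−2}) + q_{s−3} for s ≥ 3, and the integer sequence (q̃_s) by q̃₀ = 2, q̃₁ = 4, q̃_s = 4q̃_{s−1} − q̃_{s−2} for s ≥ 2. Then for every s ≥ 0 one has 3q_s − 1 = q̃_{2s+4}. -/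
/-- The sequence `q₀ = 65, q₁ = 901, q₂ = 12545, q_s = 15(q_{s−1} − q_{s−2}) + q_{s−3}`. -/
def qseq : ℕ → ℤ
  | 0 => 65
  | 1 => 901
  | 2 => 12545
  | s + 3 => 15 * (qseq (s + 2) - qseq (s + 1)) + qseq s

/-- The sequence `q̃₀ = 2, q̃₁ = 4, q̃_s = 4q̃_{s−1} − q̃_{s−2}`. -/
def qt : ℕ → ℤ
  | 0 => 2
  | 1 => 4
  | s + 2 => 4 * qt (s + 1) - qt s

lemma qseq_rec2 (s : ℕ) : qseq (s + 2) = 14 * qseq (s + 1) - qseq s - 4 := by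
  induction s with
  | zero => decide
  | succ n ih =>
    have : qseq (n + 3) = 15 * (qseq (n + 2) - qseq (n + 1)) + qseq n := rfl
    rw [show n + 1 + 2 = n + 3 from rfl, this]
    linarith

lemma qt_rec2 (n : ℕ) : qt (n + 4) = 14 * qt (n + 2) - qt n := by
  have h1 : qt (n + 4) = 4 * qt (n + 3) - qt (n + 2) := rfl
  have h2 : qt (n + 3) = 4 * qt (n + 2) - qt (n + 1) := rfl
  have h3 : qt (n + 2) = 4 * qt (n + 1) - qt n := rfl
  linarith

theorem stmt_9 (s : ℕ) : 3 * qseq s - 1 = qt (2 * s + 4) := by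
  induction s using Nat.twoStepInduction with
  | zero => decide
  | one => decide
  | more n ih1 ih2 =>
    have hq := qseq_rec2 n
    have ht := qt_rec2 (2 * n + 4)
    have e1 : 2 * (n + 2) + 4 = 2 * n + 4 + 4 := by ring
    have e2 : 2 * (n + 1) + 4 = 2 * n + 4 + 2 := by ring
    rw [e1] at *
    rw [e2] at ih2
    rw [ht]
    linarith
end

section
/- Define the integer sequence (q_s) by q₀ = 65, q₁ = 901, q₂ = 12545, and q_s = 15(q_{s−1} − q_{s−2}) + q_{s−3} for s ≥ 3. Suppose there exist an integer s ≥ 0 and an integer n ≥ 1 with q_s = 2n² + 2n + 1. Then, setting x = 2n + 1, one has x > 3 and there exists an integer y with y² = 3x⁴ + 2x² − 5 = (x² − 1)(3x² + 5). -/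
def pseq : ℕ → ℤ
  | 0 => 112
  | 1 => 1560
  | s + 2 => 14 * pseq (s + 1) - pseq s

lemma qrec : ∀ s, qseq (s + 2) = 14 * qseq (s + 1) - qseq s - 4 := by
  intro s
  induction s using Nat.strong_induction_on with
  | _ s ih =>
    match s with
    | 0 => norm_num [qseq]
    | 1 => norm_num [qseq]
    | (k+2) =>
      have h1 := ih (k+1) (by omega)
      have h2 := ih k (by omega)
      show qseq (k + 1 + 3) = _
      rw [qseq]
      linarith

lemma qge : ∀ s, 65 ≤ qseq s ∧ qseq s ≤ qseq (s + 1) := by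
  intro s
  induction s with
  | zero => norm_num [qseq]
  | succ k ih =>
    have hr := qrec k
    constructor
    · linarith [ih.1, ih.2]
    · nlinarith [ih.1, ih.2]

lemma key : ∀ s, (3 * qseq s - 1) ^ 2 - 3 * (pseq s) ^ 2 = 4 ∧
    3 * qseq (s + 1) - 1 = 7 * (3 * qseq s - 1) + 12 * pseq s ∧
    pseq (s + 1) = 4 * (3 * qseq s - 1) + 7 * pseq s := by
  intro s
  induction s with
  | zero => norm_num [qseq, pseq]
  | succ k ih =>
    obtain ⟨h1, h2, h3⟩ := ih
    have hq := qrec k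
    have hp : pseq (k + 2) = 14 * pseq (k + 1) - pseq k := rfl
    have he : (3 * qseq (k + 1) - 1) ^ 2 - 3 * (pseq (k + 1)) ^ 2 =
        (3 * qseq k - 1) ^ 2 - 3 * (pseq k) ^ 2 := by rw [h3]; rw [show (3 * qseq (k+1) - 1) = 7 * (3 * qseq k - 1) + 12 * pseq k from h2]; ring
    refine ⟨by linarith, by linarith, by linarith⟩

theorem stmt_14 (s : ℕ) (n : ℤ) (hn : 1 ≤ n) (h : qseq s = 2 * n ^ 2 + 2 * n + 1) :
    2 * n + 1 > 3 ∧ ∃ y : ℤ,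
      y ^ 2 = 3 * (2 * n + 1) ^ 4 + 2 * (2 * n + 1) ^ 2 - 5 ∧
      3 * (2 * n + 1) ^ 4 + 2 * (2 * n + 1) ^ 2 - 5 =
        ((2 * n + 1) ^ 2 - 1) * (3 * (2 * n + 1) ^ 2 + 5) := by
  have hge := (qge s).1
  have hn2 : 2 ≤ n := by nlinarith
  refine ⟨by linarith, 2 * pseq s, ?_, by ring⟩
  have hk := (key s).1
  nlinarith [hk, h]
end

section
/- For n ≥ 1 let c'_n denote the number of finite sequences (compositions) of elements of {1,2} that have odd length, whose entries sum to n, and that are palindromic (equal to their own reversal). Then in the ring ℤ⟦x⟧ of formal power series with integer coefficients, (1 − x² − x⁴) · (∑_{n≥1} c'_n x^n) = x + x²; equivalently, ∑_{n≥1} c'_n x^n = (x + x²)/(1 − x² − x⁴). -/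
/-- The number of palindromic compositions of `n` into parts `1` and `2` of odd length. -/
noncomputable def c' (n : ℕ) : ℕ :=
  {l : List ℕ | (∀ x ∈ l, x = 1 ∨ x = 2) ∧ Odd l.length ∧ l.reverse = l ∧
    l.sum = n}.ncard

namespace Aux16

def S (n : ℕ) : Set (List ℕ) :=
  {l : List ℕ | (∀ x ∈ l, x = 1 ∨ x = 2) ∧ Odd l.length ∧ l.reverse = l ∧ l.sum = n}

lemma len_le_sum {l : List ℕ} (h : ∀ x ∈ l, x = 1 ∨ x = 2) : l.length ≤ l.sum := by
  induction l with
  | nil => simp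
  | cons a t ih =>
    simp only [List.sum_cons, List.length_cons]
    have ha := h a (by simp)
    have := ih (fun x hx => h x (by simp [hx]))
    omega

lemma S_finite (n : ℕ) : (S n).Finite := by
  have hfin : {l : List Bool | l.length ≤ n}.Finite := List.finite_length_le Bool n
  apply Set.Finite.of_finite_image (f := fun l : List ℕ => l.map (· == 2))
  · apply hfin.subset
    rintro _ ⟨l, hl, rfl⟩
    simp only [Set.mem_setOf_eq, List.length_map]
    calc l.length ≤ l.sum := len_le_sum hl.1
    _ = n := hl.2.2.2
  · intro l1 h1 l2 h2 heq
    have key : ∀ l : List ℕ, (∀ x ∈ l, x = 1 ∨ x = 2) →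
        (l.map (· == 2)).map (fun b => if b then 2 else 1) = l := by
      intro l hl
      induction l with
      | nil => simp
      | cons a t ih =>
        have := hl a (by simp)
        simp only [List.map_cons, List.cons.injEq]
        refine ⟨by rcases this with h|h <;> simp [h], ih (fun x hx => hl x (by simp [hx]))⟩
    rw [← key l1 h1.1, ← key l2 h2.1]; exact congrArg _ heq


lemma sum_le_two_len {l : List ℕ} (h : ∀ x ∈ l, x = 1 ∨ x = 2) : l.sum ≤ 2 * l.length := by
  induction l with
  | nil => simp
  | cons a t ih =>
    simp only [List.sum_cons, List.length_cons]
    have ha := h a (by simp)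
    have := ih (fun x hx => h x (by simp [hx]))
    omega

lemma inj1 (a : ℕ) : Function.Injective (fun l : List ℕ => a :: l ++ [a]) := by
  intro x y h
  simpa using h

lemma mem_image (a n : ℕ) (l : List ℕ) (hl : l ∈ S n) :
    (a = 1 ∨ a = 2) → (a :: l ++ [a]) ∈ S (n + 2 * a) := by
  intro ha
  obtain ⟨h1, h2, h3, h4⟩ := hl
  refine ⟨?_, ?_, ?_, ?_⟩
  · intro x hx
    rw [List.cons_append, List.mem_cons, List.mem_append, List.mem_singleton] at hx
    rcases hx with h | h | h
    · omega
    · exact h1 x h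
    · omega
  · simpa [Nat.odd_add_one, parity_simps] using h2
  · simp [List.reverse_append, h3]
  · simp [h4]; omega

lemma S_decomp (n : ℕ) :
    S (n + 4) = (fun l : List ℕ => 1 :: l ++ [1]) '' S (n + 2) ∪
      (fun l : List ℕ => 2 :: l ++ [2]) '' S n := by
  ext l
  constructor
  · rintro ⟨h1, h2, h3, h4⟩
    have hlen : 2 ≤ l.length := by
      have := sum_le_two_len h1
      omega
    obtain ⟨a, t, rfl⟩ : ∃ a t, l = a :: t := by
      cases l with
      | nil => simp at hlen
      | cons a t => exact ⟨a, t, rfl⟩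
    have ht : t ≠ [] := by
      intro h; subst h; simp at hlen
    obtain ⟨m, b, rfl⟩ : ∃ m b, t = m ++ [b] :=
      ⟨t.dropLast, t.getLast ht, (t.dropLast_append_getLast ht).symm⟩
    have hrev : b :: (m.reverse ++ [a]) = a :: (m ++ [b]) := by
      simpa [List.reverse_append] using h3
    obtain ⟨rfl, hmb⟩ : b = a ∧ m.reverse ++ [a] = m ++ [b] := by
      constructor
      · exact (List.cons.injEq _ _ _ _ ▸ hrev).1
      · exact (List.cons.injEq _ _ _ _ ▸ hrev).2
    have hm : m.reverse = m := by
      have := congrArg List.dropLast hmb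
      simpa using this
    have hmodd : Odd m.length := by
      have hl2 : (b :: (m ++ [b])).length = m.length + 2 := by simp
      rw [hl2] at h2
      simpa [Nat.odd_add_one, parity_simps] using h2
    have hmparts : ∀ x ∈ m, x = 1 ∨ x = 2 := fun x hx => h1 x (by simp [hx])
    have hsum : b + (m.sum + b) = n + 4 := by simpa using h4
    rcases h1 b (by simp) with ha | ha
    · left
      exact ⟨m, ⟨hmparts, hmodd, hm, by omega⟩, by simp [ha]⟩
    · right
      exact ⟨m, ⟨hmparts, hmodd, hm, by omega⟩, by simp [ha]⟩
  · rintro (⟨m, hm, rfl⟩ | ⟨m, hm, rfl⟩)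
    · have := mem_image 1 (n + 2) m hm (Or.inl rfl)
      simpa using this
    · have := mem_image 2 n m hm (Or.inr rfl)
      simpa [add_comm, add_assoc, add_left_comm] using this

lemma c'_eq (n : ℕ) : c' n = (S n).ncard := rfl

lemma c'_rec (n : ℕ) : c' (n + 4) = c' (n + 2) + c' n := by
  rw [c'_eq, c'_eq, c'_eq, S_decomp]
  rw [Set.ncard_union_eq ?_ ((S_finite _).image _) ((S_finite _).image _)]
  · rw [Set.ncard_image_of_injective _ (inj1 1), Set.ncard_image_of_injective _ (inj1 2)]
  · rw [Set.disjoint_left]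
    rintro _ ⟨x, _, rfl⟩ ⟨y, _, h⟩
    simp at h


lemma c'_0 : c' 0 = 0 := by
  have h : S 0 = ∅ := by
    ext l
    simp only [Set.mem_empty_iff_false, iff_false]
    rintro ⟨h1, h2, h3, h4⟩
    have := len_le_sum h1
    have hl : l.length = 0 := by omega
    rw [hl] at h2
    exact (Nat.not_odd_iff_even.mpr (by simp)) h2
  rw [c'_eq, h]
  simp

lemma c'_1 : c' 1 = 1 := by
  have h : S 1 = {[1]} := by
    ext l
    constructor
    · rintro ⟨h1, h2, h3, h4⟩
      have hle := len_le_sum h1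
      have hge := sum_le_two_len h1
      rw [h4] at hle hge
      have hl : l.length = 1 := by omega
      obtain ⟨x, rfl⟩ := List.length_eq_one_iff.mp hl
      have : x = 1 := by simpa using h4
      simp [this]
    · rintro rfl
      exact ⟨by simp, ⟨0, rfl⟩, rfl, rfl⟩
  rw [c'_eq, h, Set.ncard_singleton]

lemma c'_2 : c' 2 = 1 := by
  have h : S 2 = {[2]} := by
    ext l
    constructor
    · rintro ⟨h1, h2, h3, h4⟩
      have hle := len_le_sum h1
      have hge := sum_le_two_len h1
      rw [h4] at hle hge
      have hl : l.length = 1 := by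
        rcases h2 with ⟨k, hk⟩
        omega
      obtain ⟨x, rfl⟩ := List.length_eq_one_iff.mp hl
      have : x = 2 := by simpa using h4
      simp [this]
    · rintro rfl
      exact ⟨by simp, ⟨0, rfl⟩, rfl, rfl⟩
  rw [c'_eq, h, Set.ncard_singleton]

lemma c'_3 : c' 3 = 1 := by
  have h : S 3 = {[1, 1, 1]} := by
    ext l
    constructor
    · rintro ⟨h1, h2, h3, h4⟩
      have hle := len_le_sum h1
      have hge := sum_le_two_len h1
      rw [h4] at hle hge
      have hl : l.length = 3 := by
        rcases h2 with ⟨k, hk⟩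
        omega
      obtain ⟨p, q, r, rfl⟩ := List.length_eq_three.mp hl
      have hp := h1 p (by simp)
      have hq := h1 q (by simp)
      have hr : r = p := by
        have : [r, q, p] = [p, q, r] := by simpa using h3
        simpa using (List.cons.injEq _ _ _ _ ▸ this).1
      have hsum : p + (q + (r + 0)) = 3 := by simpa using h4
      have : p = 1 ∧ q = 1 ∧ r = 1 := by omega
      simp [this.1, this.2.1, this.2.2]
    · rintro rfl
      exact ⟨by simp, ⟨1, rfl⟩, rfl, rfl⟩
  rw [c'_eq, h, Set.ncard_singleton]

end Aux16

open PowerSeries in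
theorem stmt_16 :
    (1 - (X : ℤ⟦X⟧) ^ 2 - X ^ 4) *
        PowerSeries.mk (fun n => if n = 0 then 0 else (c' n : ℤ)) =
      X + X ^ 2 := by
  ext n
  rw [sub_mul, sub_mul, one_mul, map_sub, map_sub, map_add,
    PowerSeries.coeff_X_pow_mul', PowerSeries.coeff_X_pow_mul',
    PowerSeries.coeff_mk, PowerSeries.coeff_mk, PowerSeries.coeff_mk,
    PowerSeries.coeff_X, PowerSeries.coeff_X_pow]
  rcases n with _ | _ | _ | _ | _ | k
  · norm_num
  · norm_num [Aux16.c'_1]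
  · norm_num [Aux16.c'_2]
  · norm_num [Aux16.c'_3, Aux16.c'_1]
  · have h := Aux16.c'_rec 0
    norm_num [Aux16.c'_2, Aux16.c'_0] at h ⊢
    rw [h]
    ring
  · have h : c' (k + 1 + 1 + 1 + 1 + 1) = c' (k + 3) + c' (k + 1) := Aux16.c'_rec (k + 1)
    norm_num [show k + 5 - 2 = k + 3 from rfl, show k + 5 - 4 = k + 1 from rfl]
    push_cast
    omega
end

section
/- For n ≥ 0 let d_n denote the number of finite sequences (compositions) of odd positive integers that have even length and whose entries sum to n (so d₀ = 1, counting the empty sequence). Then in the ring ℤ⟦x⟧ of formal power series with integer coefficients, (1 − 3x² + x⁴) · (∑_{n≥0} d_n x^n) = 1 − 2x² + x⁴; equivalently, ∑_{n≥0} d_n x^n = 1/(1 − (x/(1 − x²))²). -/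
/-!
Let `E` and `O` be the generating functions of compositions into odd parts of even and of odd
length. Removing the first part when it is `1`, and lowering it by `2` otherwise, gives
`(1 - x²) E = 1 - x² + x O` and `(1 - x²) O = x E`; eliminating `O` leaves
`((1 - x²)² - x²) E = (1 - x²)²`.
-/

/-- The number of compositions of `n` into odd parts of even length
(with the empty composition counted for `n = 0`). -/
noncomputable def d (n : ℕ) : ℕ :=
  {l : List ℕ | (∀ x ∈ l, Odd x) ∧ Even l.length ∧ l.sum = n}.ncard

open PowerSeries

theorem List.modifyHead_injective {α : Type*} {f : α → α} (hf : Function.Injective f) :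
    Function.Injective (List.modifyHead f) := by
  rintro (_ | ⟨a, s⟩) (_ | ⟨b, t⟩) h <;> simp_all [hf.eq_iff]

def oddCompositions (P : ℕ → Prop) (n : ℕ) : Set (List ℕ) :=
  {l | (∀ x ∈ l, Odd x) ∧ P l.length ∧ l.sum = n}

section oddCompositions

variable (P : ℕ → Prop)

theorem oddCompositions_finite (n : ℕ) : (oddCompositions P n).Finite := by
  refine (Set.finite_range fun c : Composition n => c.blocks).subset ?_
  rintro l ⟨hodd, -, hsum⟩
  exact ⟨⟨l, fun hi => (hodd _ hi).pos, hsum⟩, rfl⟩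

theorem nil_mem_oddCompositions_iff (n : ℕ) : [] ∈ oddCompositions P n ↔ P 0 ∧ n = 0 := by
  simp [oddCompositions, eq_comm]

theorem cons_mem_oddCompositions_iff (a n : ℕ) (t : List ℕ) :
    a :: t ∈ oddCompositions P n ↔
      Odd a ∧ a ≤ n ∧ t ∈ oddCompositions (fun k => P (k + 1)) (n - a) := by
  simp only [oddCompositions, Set.mem_ofPred_eq, List.forall_mem_cons, List.length_cons,
    List.sum_cons]
  constructor
  · rintro ⟨⟨ha, ht⟩, hP, hsum⟩
    exact ⟨ha, by omega, ht, hP, by omega⟩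
  · rintro ⟨ha, han, ht, hP, hsum⟩
    exact ⟨⟨ha, ht⟩, hP, by omega⟩

theorem eq_nil_of_mem_oddCompositions_zero {l : List ℕ} (hl : l ∈ oddCompositions P 0) :
    l = [] := by
  obtain ⟨hodd, -, hsum⟩ := hl
  exact List.eq_nil_iff_forall_not_mem.2 fun x hx =>
    (hodd x hx).pos.ne' (List.sum_eq_zero_iff.1 hsum x hx)

theorem ncard_oddCompositions_zero [Decidable (P 0)] :
    (oddCompositions P 0).ncard = if P 0 then 1 else 0 := by
  have hnil := nil_mem_oddCompositions_iff P 0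
  rcases Set.subset_singleton_iff_eq.1 fun _ => eq_nil_of_mem_oddCompositions_zero P with h | h <;>
    simp_all

theorem oddCompositions_one :
    oddCompositions P 1 = List.cons 1 '' oddCompositions (fun k => P (k + 1)) 0 := by
  ext (_ | ⟨a, t⟩)
  · simp [nil_mem_oddCompositions_iff]
  · simp only [cons_mem_oddCompositions_iff, Set.mem_image, List.cons.injEq]
    constructor
    · rintro ⟨ha, ha1, ht⟩
      obtain rfl : a = 1 := by have := ha.pos; omega
      exact ⟨t, ht, rfl, rfl⟩
    · rintro ⟨t, ht, rfl, rfl⟩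
      exact ⟨odd_one, le_rfl, ht⟩

theorem ncard_oddCompositions_one :
    (oddCompositions P 1).ncard = (oddCompositions (fun k => P (k + 1)) 0).ncard := by
  rw [oddCompositions_one, Set.ncard_image_of_injective _ List.cons_injective]

theorem oddCompositions_add_two (n : ℕ) :
    oddCompositions P (n + 2) =
      List.cons 1 '' oddCompositions (fun k => P (k + 1)) (n + 1) ∪
        List.modifyHead (· + 2) '' (oddCompositions P n \ {[]}) := by
  ext (_ | ⟨a, t⟩)
  · simp [nil_mem_oddCompositions_iff]
  · simp only [cons_mem_oddCompositions_iff, Set.mem_union, Set.mem_image, List.cons.injEq,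
      exists_eq_right_right, Set.mem_sdiff, Set.mem_singleton_iff]
    constructor
    · rintro ⟨ha, han, ht⟩
      obtain rfl | ha3 : a = 1 ∨ 3 ≤ a := by obtain ⟨k, rfl⟩ := ha; omega
      · exact .inl ⟨ht, rfl⟩
      · refine .inr ⟨(a - 2) :: t, ⟨?_, List.cons_ne_nil _ _⟩, ?_⟩
        · refine (cons_mem_oddCompositions_iff P _ _ _).2
            ⟨Nat.Odd.sub_even (by omega) ha even_two, by omega, ?_⟩
          convert ht using 2; omega
        · rw [List.modifyHead_cons, Nat.sub_add_cancel (by omega)]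
    · rintro (⟨ht, rfl⟩ | ⟨_ | ⟨b, s⟩, ⟨hmem, hne⟩, heq⟩)
      · exact ⟨odd_one, by omega, ht⟩
      · exact absurd rfl hne
      · simp only [List.modifyHead_cons, List.cons.injEq] at heq
        obtain ⟨rfl, rfl⟩ := heq
        obtain ⟨hb, hbn, hs⟩ := (cons_mem_oddCompositions_iff P _ _ _).1 hmem
        exact ⟨hb.add_even even_two, by omega, by convert hs using 2; omega⟩

theorem ncard_oddCompositions_add_two (n : ℕ) :
    (oddCompositions P (n + 2)).ncard =
      (oddCompositions (fun k => P (k + 1)) (n + 1)).ncard +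
        (oddCompositions P n \ {[]}).ncard := by
  have hdisj : Disjoint (List.cons 1 '' oddCompositions (fun k => P (k + 1)) (n + 1))
      (List.modifyHead (· + 2) '' (oddCompositions P n \ {[]})) := by
    rw [Set.disjoint_left]
    rintro _ ⟨t, -, rfl⟩ ⟨_ | ⟨b, s⟩, ⟨-, hne⟩, heq⟩
    · exact hne rfl
    · simp only [List.modifyHead_cons, List.cons.injEq] at heq
      omega
  rw [oddCompositions_add_two, Set.ncard_union_eq hdisj ((oddCompositions_finite _ _).image _)
      ((oddCompositions_finite _ _).sdiff.image _),
    Set.ncard_image_of_injective _ List.cons_injective,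
    Set.ncard_image_of_injective _ (List.modifyHead_injective (add_left_injective 2))]

theorem ncard_oddCompositions_sdiff_nil_add [Decidable (P 0)] (n : ℕ) :
    (oddCompositions P n \ {[]}).ncard + (if P 0 ∧ n = 0 then 1 else 0) =
      (oddCompositions P n).ncard := by
  split_ifs with h
  · exact Set.ncard_sdiff_singleton_add_one ((nil_mem_oddCompositions_iff P n).2 h)
      (oddCompositions_finite P n)
  · rw [Set.sdiff_singleton_eq_self (mt (nil_mem_oddCompositions_iff P n).1 h), add_zero]

end oddCompositions

noncomputable def oddCompositionSeries (P : ℕ → Prop) : ℤ⟦X⟧ :=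
  mk fun n => ((oddCompositions P n).ncard : ℤ)

theorem one_sub_X_sq_mul_oddCompositionSeries (P : ℕ → Prop) [Decidable (P 0)] :
    (1 - X ^ 2) * oddCompositionSeries P =
      (if P 0 then 1 - X ^ 2 else 0) + X * oddCompositionSeries (fun k => P (k + 1)) := by
  ext k
  match k with
  | 0 => by_cases hP : P 0 <;> simp [oddCompositionSeries, hP, ncard_oddCompositions_zero]
  | 1 =>
    by_cases hP : P 0 <;> simp [oddCompositionSeries, hP, ncard_oddCompositions_one, coeff_X_pow,
      sub_mul, coeff_X_pow_mul']
  | n + 2 =>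
    have h2 := ncard_oddCompositions_add_two P n
    have h0 := ncard_oddCompositions_sdiff_nil_add P n
    by_cases hP : P 0
    · simp only [hP, true_and] at h0
      simp only [oddCompositionSeries, sub_mul, one_mul, map_sub, map_add, coeff_mk,
        coeff_X_pow_mul, coeff_succ_X_mul, hP, if_true, coeff_one, coeff_X_pow,
        Nat.add_eq_zero_iff, Nat.add_eq_right, OfNat.ofNat_ne_zero, and_false, if_false, zero_sub]
      split_ifs at h0 ⊢ <;> omega
    · simp only [hP, false_and, if_false, add_zero] at h0
      simp only [oddCompositionSeries, sub_mul, one_mul, map_sub, coeff_mk,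
        coeff_X_pow_mul, coeff_succ_X_mul, hP, if_false, zero_add]
      omega

open PowerSeries in
theorem stmt_17 :
    (1 - 3 * (X : ℤ⟦X⟧) ^ 2 + X ^ 4) * PowerSeries.mk (fun n => (d n : ℤ)) =
      1 - 2 * X ^ 2 + X ^ 4 := by
  have hEven := one_sub_X_sq_mul_oddCompositionSeries Even
  have hOdd := one_sub_X_sq_mul_oddCompositionSeries fun k => Even (k + 1)
  simp only [Nat.even_add_one, not_not, Even.zero, not_true_eq_false, if_true, if_false,
    zero_add] at hEven hOdd
  change _ * oddCompositionSeries Even = _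
  linear_combination (1 - X ^ 2) * hEven + X * hOdd
end

section
/- For every m ≥ 0, the number of palindromic finite sequences (compositions) of odd positive integers that have even length and whose entries sum to 2m equals the number of finite sequences of odd positive integers (of arbitrary length) whose entries sum to m. -/
theorem stmt_18 (m : ℕ) :
    {l : List ℕ | (∀ x ∈ l, Odd x) ∧ Even l.length ∧ l.reverse = l ∧
        l.sum = 2 * m}.ncard =
      {l : List ℕ | (∀ x ∈ l, Odd x) ∧ l.sum = m}.ncard := by
  have himg : {l : List ℕ | (∀ x ∈ l, Odd x) ∧ Even l.length ∧ l.reverse = l ∧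
        l.sum = 2 * m}
      = (fun r : List ℕ => r.reverse ++ r) '' {l : List ℕ | (∀ x ∈ l, Odd x) ∧ l.sum = m} := by
    ext l
    constructor
    · rintro ⟨hodd, ⟨k, hk⟩, hpal, hsum⟩
      have hsplit : l.take k ++ l.drop k = l := List.take_append_drop k l
      have hlen1 : ((l.drop k).reverse).length = (l.take k).length := by
        simp; omega
      have hrev : l.reverse = (l.drop k).reverse ++ (l.take k).reverse := by
        conv_lhs => rw [← hsplit]
        simp
      have heq : (l.drop k).reverse ++ (l.take k).reverse = l.take k ++ l.drop k := by
        rw [← hrev, hpal, hsplit]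
      have htake : (l.drop k).reverse = l.take k := (List.append_inj heq hlen1).1
      have hl : (l.drop k).reverse ++ l.drop k = l := by rw [htake, hsplit]
      have hsum2 : (l.drop k).sum = m := by
        have : (l.take k).sum + (l.drop k).sum = l.sum := by
          rw [← List.sum_append, hsplit]
        rw [← htake, List.sum_reverse] at this
        omega
      exact ⟨l.drop k, ⟨fun x hx => hodd x (List.mem_of_mem_drop hx), hsum2⟩, hl⟩
      
    · rintro ⟨r, ⟨hodd, hsum⟩, rfl⟩
      refine ⟨?_, ?_, ?_, ?_⟩
      · intro x hx
        rcases List.mem_append.1 hx with h | h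
        · exact hodd x (List.mem_reverse.1 h)
        · exact hodd x h
      · simp [Even]; exact ⟨r.length, by ring⟩
      · simp
      · simp [List.sum_reverse, hsum]; ring
  rw [himg, Set.ncard_image_of_injOn]
  intro a _ b _ h
  have hlen : a.length = b.length := by
    have := congrArg List.length h
    simp at this
    omega
  exact (List.append_inj h (by simp [hlen])).2
end
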